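/- arXiv:2603.29982 — 3 statements merged into one kernel-verified Lean document; each statement's English description precedes it below -/
import Mathlib

section
/- Let (Ξ, F) be a measurable space, X ⊆ ℝ^d a nonempty compact set, g : X × Ξ → ℝ jointly measurable with y ↦ g(y, ξ) continuous on X for each ξ ∈ Ξ, P a probability measure on (Ξ, F), γ ∈ ℝ, and ε ∈ (0,1). Assume the boundary regularity P({ξ : g(y, ξ) = γ}) = 0 for every y ∈ X. Then the set {y ∈ X : P({ξ : g(y, ξ) ≤ γ}) ≥ 1 − ε} is closed (hence compact), and if it is nonempty then for any continuous f : X → ℝ the set of minimizers of f over it is nonempty and compact. -/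
open MeasureTheory
open scoped ENNReal

/-- Compactness of the chance-feasible set and of the set of
minimizers of a continuous objective over it, under boundary regularity. -/
theorem chance_feasible_set_compact_and_argmin
    {d : ℕ} {Ξ : Type*} [MeasurableSpace Ξ]
    (X : Set (EuclideanSpace ℝ (Fin d)))
    (hXne : X.Nonempty) (hXcomp : IsCompact X)
    (g : EuclideanSpace ℝ (Fin d) → Ξ → ℝ)
    (hg_meas : Measurable fun p : EuclideanSpace ℝ (Fin d) × Ξ => g p.1 p.2)
    (hg_cont : ∀ ξ : Ξ, ContinuousOn (fun y => g y ξ) X)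
    (P : Measure Ξ) [IsProbabilityMeasure P]
    (γ : ℝ) (ε : ℝ) (hε : ε ∈ Set.Ioo (0 : ℝ) 1)
    (hboundary : ∀ y ∈ X, P {ξ | g y ξ = γ} = 0)
    (S : Set (EuclideanSpace ℝ (Fin d)))
    (hS : S = {y ∈ X | ENNReal.ofReal (1 - ε) ≤ P {ξ | g y ξ ≤ γ}}) :
    IsClosed S ∧ IsCompact S ∧
      (S.Nonempty →
        ∀ f : EuclideanSpace ℝ (Fin d) → ℝ, ContinuousOn f X →
          ({y ∈ S | ∀ z ∈ S, f y ≤ f z}.Nonempty ∧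
            IsCompact {y ∈ S | ∀ z ∈ S, f y ≤ f z})) := by
  have hXcl : IsClosed X := hXcomp.isClosed
  have hε1 : (0 : ℝ) ≤ 1 - ε := by linarith [hε.2]
  have hε0 : (0 : ℝ) ≤ ε := le_of_lt hε.1
  -- measurability of the sections
  have hAm : ∀ y, MeasurableSet {ξ | g y ξ ≤ γ} := by
    intro y
    have hm : Measurable (fun ξ => g y ξ) :=
      hg_meas.comp (measurable_const.prodMk measurable_id)
    exact hm measurableSet_Iic
  -- key ENNReal identities
  have hofReal : (1 : ℝ≥0∞) - ENNReal.ofReal (1 - ε) = ENNReal.ofReal ε := by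
    rw [← ENNReal.ofReal_one, ← ENNReal.ofReal_sub _ hε1]
    norm_num
  have hofReal' : (1 : ℝ≥0∞) - ENNReal.ofReal ε = ENNReal.ofReal (1 - ε) := by
    rw [← ENNReal.ofReal_one, ← ENNReal.ofReal_sub _ hε0]
  have hSsub : S ⊆ X := by rw [hS]; exact fun y hy => hy.1
  have hSclosed : IsClosed S := by
    rw [hS]
    apply IsSeqClosed.isClosed
    intro u y hu huy
    have hyX : y ∈ X := hXcl.isSeqClosed (fun n => (hu n).1) huy
    refine ⟨hyX, ?_⟩
    -- the "bad" sets
    set B : EuclideanSpace ℝ (Fin d) → Set Ξ := fun z => {ξ | γ < g z ξ} with hB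
    have hBc : ∀ z, B z = {ξ | g z ξ ≤ γ}ᶜ := by
      intro z; ext ξ; simp [hB, not_le]
    -- each bad set along the sequence has measure at most ε
    have hbad : ∀ n, P (B (u n)) ≤ ENNReal.ofReal ε := by
      intro n
      rw [hBc, prob_compl_eq_one_sub (hAm (u n)), ← hofReal]
      exact tsub_le_tsub_left (hu n).2 1
    -- the limit bad set is contained in the monotone union of tails
    set T : ℕ → Set Ξ := fun N => ⋂ n : ℕ, B (u (N + n)) with hT
    have hTmono : Monotone T := by
      intro a b hab ξ hξ
      refine Set.mem_iInter.2 fun n => ?_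
      have h := Set.mem_iInter.1 hξ (b - a + n)
      rwa [show a + (b - a + n) = b + n by omega] at h
    have huX : Filter.Tendsto u Filter.atTop (nhdsWithin y X) :=
      tendsto_nhdsWithin_of_tendsto_nhds_of_eventually_within u huy
        (Filter.Eventually.of_forall fun n => (hu n).1)
    have hsub : B y ⊆ ⋃ N : ℕ, T N := by
      intro ξ hξ
      have hgt : Filter.Tendsto (fun n => g (u n) ξ) Filter.atTop (nhds (g y ξ)) :=
        Filter.Tendsto.comp (hg_cont ξ y hyX) huX
      have hev : ∀ᶠ n in Filter.atTop, γ < g (u n) ξ :=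
        hgt.eventually_const_lt hξ
      obtain ⟨N, hN⟩ := Filter.eventually_atTop.1 hev
      exact Set.mem_iUnion.2 ⟨N, Set.mem_iInter.2 fun n => hN (N + n) (by omega)⟩
    have hdir : Directed (· ⊆ ·) T := hTmono.directed_le
    have hBy : P (B y) ≤ ENNReal.ofReal ε := by
      calc P (B y) ≤ P (⋃ N, T N) := measure_mono hsub
        _ = ⨆ N, P (T N) := hdir.measure_iUnion
        _ ≤ ENNReal.ofReal ε := by
            refine iSup_le fun N => le_trans (measure_mono ?_) (hbad N)
            have h := Set.iInter_subset (fun n => B (u (N + n))) 0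
            simpa using h
    have : P {ξ | g y ξ ≤ γ} = 1 - P (B y) := by
      rw [hBc]
      have h := prob_compl_eq_one_sub (μ := P) (hAm y).compl
      rwa [compl_compl] at h
    rw [this, ← hofReal']
    exact tsub_le_tsub_left hBy 1
  have hScomp : IsCompact S := hXcomp.of_isClosed_subset hSclosed hSsub
  refine ⟨hSclosed, hScomp, ?_⟩
  intro hSne f hf
  obtain ⟨x0, hx0S, hx0⟩ := hScomp.exists_isMinOn hSne (hf.mono hSsub)
  have hmin : ∀ z ∈ S, f x0 ≤ f z := fun z hz => isMinOn_iff.mp hx0 z hz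
  have heq : {y ∈ S | ∀ z ∈ S, f y ≤ f z} = S ∩ f ⁻¹' Set.Iic (f x0) := by
    ext y
    constructor
    · rintro ⟨hyS, hy⟩; exact ⟨hyS, hy x0 hx0S⟩
    · rintro ⟨hyS, hy⟩; exact ⟨hyS, fun z hz => le_trans hy (hmin z hz)⟩
  have hclosed : IsClosed (S ∩ f ⁻¹' Set.Iic (f x0)) :=
    (hf.mono hSsub).preimage_isClosed_of_isClosed hSclosed isClosed_Iic
  constructor
  · exact ⟨x0, hx0S, hmin⟩
  · rw [heq]
    exact hScomp.of_isClosed_subset hclosed Set.inter_subset_left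
end

section
/- Let Ξ be a metric space with its Borel σ-algebra, X ⊆ ℝ^d nonempty compact, and g : X × Ξ → ℝ jointly continuous. Let (μ_n) be probability measures on Ξ converging weakly to a probability measure μ (i.e., ∫ φ dμ_n → ∫ φ dμ for every bounded continuous φ : Ξ → ℝ), let y_n → y in X, and assume μ({ξ : g(y, ξ) = γ}) = 0. Then μ_n({ξ : g(y_n, ξ) ≤ γ}) → μ({ξ : g(y, ξ) ≤ γ}). In particular, if μ_n({ξ : g(y_n, ξ) ≤ γ}) ≥ 1 − ε for all n, then μ({ξ : g(y, ξ) ≤ γ}) ≥ 1 − ε. -/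
open MeasureTheory Filter

/-- Joint continuity of chance constraints under weak
convergence of measures and convergence of decisions, given boundary
regularity at the limit. -/
theorem chance_constraint_weak_convergence
    {d : ℕ} {Ξ : Type*} [MetricSpace Ξ] [MeasurableSpace Ξ] [BorelSpace Ξ]
    (X : Set (EuclideanSpace ℝ (Fin d)))
    (hXne : X.Nonempty) (hXcomp : IsCompact X)
    (g : EuclideanSpace ℝ (Fin d) → Ξ → ℝ)
    (hg_cont : Continuous fun p : EuclideanSpace ℝ (Fin d) × Ξ => g p.1 p.2)
    (μseq : ℕ → Measure Ξ) (μ : Measure Ξ)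
    [∀ n, IsProbabilityMeasure (μseq n)] [IsProbabilityMeasure μ]
    (hweak : ∀ φ : BoundedContinuousFunction Ξ ℝ,
      Tendsto (fun n => ∫ ξ, φ ξ ∂(μseq n)) atTop (nhds (∫ ξ, φ ξ ∂μ)))
    (y : ℕ → EuclideanSpace ℝ (Fin d)) (ylim : EuclideanSpace ℝ (Fin d))
    (hyX : ∀ n, y n ∈ X) (hylimX : ylim ∈ X)
    (hconv : Tendsto y atTop (nhds ylim))
    (γ : ℝ) (ε : ℝ) (hε : ε ∈ Set.Ioo (0 : ℝ) 1)
    (hboundary : μ {ξ | g ylim ξ = γ} = 0) :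
    Tendsto (fun n => μseq n {ξ | g (y n) ξ ≤ γ}) atTop
        (nhds (μ {ξ | g ylim ξ ≤ γ})) ∧
      ((∀ n, ENNReal.ofReal (1 - ε) ≤ μseq n {ξ | g (y n) ξ ≤ γ}) →
        ENNReal.ofReal (1 - ε) ≤ μ {ξ | g ylim ξ ≤ γ}) := by
  -- continuity of the slices
  have hfn_cont : ∀ n, Continuous fun ξ => g (y n) ξ := fun n =>
    hg_cont.comp (continuous_const.prodMk continuous_id)
  have hf_cont : Continuous fun ξ => g ylim ξ :=
    hg_cont.comp (continuous_const.prodMk continuous_id)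
  -- weak convergence as `ProbabilityMeasure` convergence
  set P : ℕ → ProbabilityMeasure Ξ := fun n => ⟨μseq n, inferInstance⟩ with hP
  set Q : ProbabilityMeasure Ξ := ⟨μ, inferInstance⟩ with hQ
  have hPQ : Tendsto P atTop (nhds Q) := by
    rw [ProbabilityMeasure.tendsto_iff_forall_integral_tendsto]
    exact hweak
  -- Key lemma: for any open set `G ⊆ ℝ`,
  -- `μ (g ylim ⁻¹ G) ≤ liminf μseq n (g (y n) ⁻¹ G)`.
  have key : ∀ G : Set ℝ, IsOpen G →
      μ {ξ | g ylim ξ ∈ G} ≤ atTop.liminf fun n => μseq n {ξ | g (y n) ξ ∈ G} := by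
    intro G hG
    set V : ℕ → Set Ξ := fun k =>
      {ξ | ∃ r > (0:ℝ), ∀ ξ' ∈ Metric.ball ξ r, ∀ n ≥ k, g (y n) ξ' ∈ G} with hV
    have V_open : ∀ k, IsOpen (V k) := by
      intro k
      rw [Metric.isOpen_iff]
      rintro ξ ⟨r, hr, hball⟩
      refine ⟨r, hr, fun ξ' hξ' => ⟨r - dist ξ' ξ, by simp [Metric.mem_ball] at hξ'; linarith,
        fun ξ'' hξ'' n hn => hball ξ'' ?_ n hn⟩⟩
      rw [Metric.mem_ball] at *
      calc dist ξ'' ξ ≤ dist ξ'' ξ' + dist ξ' ξ := dist_triangle _ _ _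
        _ < (r - dist ξ' ξ) + dist ξ' ξ := by linarith
        _ = r := by ring
    have V_mono : Monotone V := by
      rintro k l hkl ξ ⟨r, hr, h⟩
      exact ⟨r, hr, fun ξ' hξ' n hn => h ξ' hξ' n (hkl.trans hn)⟩
    have V_sub : ∀ k, ∀ n ≥ k, V k ⊆ {ξ | g (y n) ξ ∈ G} := by
      rintro k n hn ξ ⟨r, hr, h⟩
      exact h ξ (Metric.mem_ball_self hr) n hn
    have V_cover : {ξ | g ylim ξ ∈ G} ⊆ ⋃ k, V k := by
      intro ξ hξ
      have hmem : (fun p : EuclideanSpace ℝ (Fin d) × Ξ => g p.1 p.2) ⁻¹' G ∈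
          nhds (ylim, ξ) := hg_cont.continuousAt.preimage_mem_nhds (hG.mem_nhds hξ)
      rw [nhds_prod_eq, Filter.mem_prod_iff] at hmem
      obtain ⟨U, hU, W, hW, hUW⟩ := hmem
      obtain ⟨r, hr, hball⟩ := Metric.mem_nhds_iff.mp hW
      obtain ⟨k, hk⟩ := (eventually_atTop).mp (hconv.eventually_mem hU)
      refine Set.mem_iUnion.mpr ⟨k, r, hr, fun ξ' hξ' n hn => ?_⟩
      exact hUW (Set.mk_mem_prod (hk n hn) (hball hξ'))
    calc μ {ξ | g ylim ξ ∈ G} ≤ μ (⋃ k, V k) := measure_mono V_cover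
      _ = ⨆ k, μ (V k) := (V_mono.directed_le).measure_iUnion
      _ ≤ atTop.liminf fun n => μseq n {ξ | g (y n) ξ ∈ G} := by
          refine iSup_le fun k => ?_
          calc μ (V k) ≤ atTop.liminf fun n => μseq n (V k) := by
                have := ProbabilityMeasure.le_liminf_measure_open_of_tendsto hPQ (V_open k)
                exact this
            _ ≤ atTop.liminf fun n => μseq n {ξ | g (y n) ξ ∈ G} := by
                refine liminf_le_liminf (eventually_atTop.mpr ⟨k, fun n hn => ?_⟩)
                exact measure_mono (V_sub k n hn)
  -- boundary regularity: μ {f < γ} = μ {f ≤ γ}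
  have hlt_eq : μ {ξ | g ylim ξ < γ} = μ {ξ | g ylim ξ ≤ γ} := by
    refine le_antisymm (measure_mono fun ξ h => show g ylim ξ ≤ γ from le_of_lt h) ?_
    calc μ {ξ | g ylim ξ ≤ γ} ≤ μ ({ξ | g ylim ξ < γ} ∪ {ξ | g ylim ξ = γ}) := by
          refine measure_mono fun ξ h => ?_
          rcases lt_or_eq_of_le (show g ylim ξ ≤ γ from h) with h' | h'
          · exact Or.inl h'
          · exact Or.inr h'
      _ ≤ μ {ξ | g ylim ξ < γ} + μ {ξ | g ylim ξ = γ} := measure_union_le _ _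
      _ = μ {ξ | g ylim ξ < γ} := by rw [hboundary, add_zero]
  -- liminf bound
  have h_liminf : μ {ξ | g ylim ξ ≤ γ} ≤
      atTop.liminf fun n => μseq n {ξ | g (y n) ξ ≤ γ} := by
    rw [← hlt_eq]
    calc μ {ξ | g ylim ξ < γ} ≤ atTop.liminf fun n => μseq n {ξ | g (y n) ξ < γ} :=
          key (Set.Iio γ) isOpen_Iio
      _ ≤ atTop.liminf fun n => μseq n {ξ | g (y n) ξ ≤ γ} :=
          liminf_le_liminf (Eventually.of_forall fun n =>
            measure_mono fun ξ h => show g (y n) ξ ≤ γ from le_of_lt h)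
  -- limsup bound via complements
  have h_limsup : (atTop.limsup fun n => μseq n {ξ | g (y n) ξ ≤ γ}) ≤
      μ {ξ | g ylim ξ ≤ γ} := by
    have hc : ∀ n, {ξ | g (y n) ξ ≤ γ}ᶜ = {ξ | g (y n) ξ ∈ Set.Ioi γ} := by
      intro n; ext ξ; simp [not_le]
    have hcl : {ξ | g ylim ξ ≤ γ}ᶜ = {ξ | g ylim ξ ∈ Set.Ioi γ} := by
      ext ξ; simp [not_le]
    have hkey := key (Set.Ioi γ) isOpen_Ioi
    rw [← hcl] at hkey
    -- μseq n A n = 1 - μseq n (A n)ᶜ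
    have h_meas : ∀ n, MeasurableSet {ξ | g (y n) ξ ≤ γ} :=
      fun n => measurableSet_le (hfn_cont n).measurable measurable_const
    have h_measl : MeasurableSet {ξ | g ylim ξ ≤ γ} :=
      measurableSet_le hf_cont.measurable measurable_const
    have h_eq : ∀ n, μseq n {ξ | g (y n) ξ ≤ γ}
        = 1 - μseq n ({ξ | g (y n) ξ ≤ γ}ᶜ) := by
      intro n
      have := measure_compl (μ := μseq n) (h_meas n) (measure_ne_top _ _)
      rw [this, measure_univ]
      rw [ENNReal.sub_sub_cancel ENNReal.one_ne_top prob_le_one]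
    have h_eql : μ {ξ | g ylim ξ ≤ γ} = 1 - μ ({ξ | g ylim ξ ≤ γ}ᶜ) := by
      have := measure_compl (μ := μ) h_measl (measure_ne_top _ _)
      rw [this, measure_univ]
      rw [ENNReal.sub_sub_cancel ENNReal.one_ne_top prob_le_one]
    simp_rw [h_eq, h_eql]
    rw [show (atTop.limsup fun n : ℕ => 1 - μseq n ({ξ | g (y n) ξ ≤ γ}ᶜ))
        = atTop.limsup ((fun x => 1 - x) ∘ fun n : ℕ => μseq n ({ξ | g (y n) ξ ≤ γ}ᶜ)) from rfl]
    have keymap := antitone_const_tsub.map_liminf_of_continuousAt (F := atTop)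
      (fun n : ℕ => μseq n ({ξ | g (y n) ξ ≤ γ}ᶜ))
      (ENNReal.continuous_sub_left ENNReal.one_ne_top).continuousAt
    rw [← keymap]
    simp only [← hc] at hkey
    exact tsub_le_tsub_left hkey 1
  refine ⟨tendsto_of_le_liminf_of_limsup_le h_liminf h_limsup, fun h => ?_⟩
  exact ge_of_tendsto' (tendsto_of_le_liminf_of_limsup_le h_liminf h_limsup) h
end

section
/- Let X ⊆ ℝ^d be nonempty compact, φ : X → X a K-Lipschitz map with K ∈ (0,1) and unique fixed point x⋆. On a probability space (Ω, F, P) with filtration (F_t), let (x_t) be an (F_t)-adapted X-valued process satisfying x_{t+1} = φ(x_t) + e_t, where the errors satisfy P(‖e_t‖ > η_t | F_t) ≤ δ_t almost surely for deterministic nonnegative sequences (η_t), (δ_t) with Σ_{t=0}^∞ δ_t < ∞ and η_t → 0. Then x_t → x⋆ P-almost surely. -/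
open MeasureTheory Filter
open scoped ENNReal

/-- Deterministic contraction-with-vanishing-error lemma. -/
lemma det_contraction_aux {K : ℝ} (hK0 : 0 < K) (hK1 : K < 1) (a c : ℕ → ℝ)
    (ha : ∀ t, 0 ≤ a t) (hc : ∀ t, 0 ≤ c t)
    (hrec : ∀ t, a (t + 1) ≤ K * a t + c t)
    (hc0 : Tendsto c atTop (nhds 0)) :
    Tendsto a atTop (nhds 0) := by
  rw [Metric.tendsto_atTop]
  intro ε hε
  have h1K : 0 < 1 - K := by linarith
  have hε' : 0 < (1 - K) * ε / 2 := by positivity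
  obtain ⟨T, hT⟩ := (Metric.tendsto_atTop.mp hc0) ((1 - K) * ε / 2) hε'
  have key : ∀ n, a (T + n) ≤ K ^ n * a T + ε / 2 := by
    intro n
    induction n with
    | zero => simp; nlinarith [ha T]
    | succ n ih =>
      have h1 := hrec (T + n)
      have h2 : c (T + n) ≤ (1 - K) * ε / 2 := by
        have := hT (T + n) (Nat.le_add_right T n)
        rw [Real.dist_eq, sub_zero, abs_of_nonneg (hc _)] at this
        linarith
      have : a (T + n + 1) ≤ K * (K ^ n * a T + ε / 2) + (1 - K) * ε / 2 := by
        calc a (T + n + 1) ≤ K * a (T + n) + c (T + n) := h1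
          _ ≤ K * (K ^ n * a T + ε / 2) + (1 - K) * ε / 2 := by
              have := mul_le_mul_of_nonneg_left ih hK0.le
              linarith
      calc a (T + (n + 1)) = a (T + n + 1) := by ring_nf
        _ ≤ K * (K ^ n * a T + ε / 2) + (1 - K) * ε / 2 := this
        _ ≤ K ^ (n + 1) * a T + ε / 2 := by ring_nf; nlinarith
  have hpow : Tendsto (fun n => K ^ n * a T) atTop (nhds 0) := by
    have := tendsto_pow_atTop_nhds_zero_of_lt_one hK0.le hK1
    simpa using this.mul_const (a T)
  obtain ⟨N, hN⟩ := (Metric.tendsto_atTop.mp hpow) (ε / 2) (by linarith)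
  refine ⟨T + N, fun t ht => ?_⟩
  have hn : t = T + (t - T) := by omega
  have hN' : N ≤ t - T := by omega
  have h1 := key (t - T)
  have h2 := hN (t - T) hN'
  rw [Real.dist_eq, sub_zero] at h2
  have h2' : K ^ (t - T) * a T < ε / 2 := lt_of_le_of_lt (le_abs_self _) h2
  rw [Real.dist_eq, sub_zero, abs_of_nonneg (ha t)]
  rw [hn]
  calc a (T + (t - T)) ≤ K ^ (t - T) * a T + ε / 2 := h1
    _ < ε / 2 + ε / 2 := by linarith
    _ = ε := by ring

/-- Almost sure convergence of the stochastic (scenario-based)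
fixed-point iteration `x_{t+1} = φ(x_t) + e_t` to the unique fixed point `x⋆`
of the contraction `φ`, when the errors satisfy
`P(‖e_t‖ > η_t | F_t) ≤ δ_t` a.s. with `Σ_t δ_t < ∞` and `η_t → 0`. -/
theorem stochastic_fixed_point_iteration_as_convergence
    {d : ℕ} {Ω : Type*} {mΩ : MeasurableSpace Ω}
    (μ : Measure Ω) [IsProbabilityMeasure μ]
    (F : Filtration ℕ mΩ)
    (X : Set (EuclideanSpace ℝ (Fin d)))
    (hXne : X.Nonempty) (hXcomp : IsCompact X)
    (φ : EuclideanSpace ℝ (Fin d) → EuclideanSpace ℝ (Fin d))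
    (hmaps : Set.MapsTo φ X X)
    (K : ℝ) (hK : K ∈ Set.Ioo (0 : ℝ) 1)
    (hlip : ∀ x ∈ X, ∀ y ∈ X, ‖φ x - φ y‖ ≤ K * ‖x - y‖)
    (xstar : EuclideanSpace ℝ (Fin d)) (hxstarX : xstar ∈ X)
    (hfix : φ xstar = xstar)
    (x : ℕ → Ω → EuclideanSpace ℝ (Fin d))
    (hadapted : Adapted F x)
    (hxX : ∀ t, ∀ ω, x t ω ∈ X)
    (e : ℕ → Ω → EuclideanSpace ℝ (Fin d))
    (hrec : ∀ t, ∀ ω, x (t + 1) ω = φ (x t ω) + e t ω)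
    (η δ : ℕ → ℝ) (hη : ∀ t, 0 ≤ η t) (hδ : ∀ t, 0 ≤ δ t)
    (hcond : ∀ t, ∀ᵐ ω ∂μ,
      (μ[Set.indicator {ω' | η t < ‖e t ω'‖} (fun _ => (1 : ℝ)) | F t]) ω ≤ δ t)
    (hδsum : Summable δ)
    (hη0 : Tendsto η atTop (nhds 0)) :
    ∀ᵐ ω ∂μ, Tendsto (fun t => x t ω) atTop (nhds xstar) := by
  obtain ⟨hK0, hK1⟩ := hK
  -- measurability of x t and e t
  have hxmeas : ∀ t, Measurable (x t) := fun t =>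
    (hadapted t).mono (F.le t) le_rfl
  have hφx : ∀ t, Measurable (fun ω => φ (x t ω)) := by
    intro t
    have hcont : Continuous (X.restrict φ) := by
      apply LipschitzOnWith.continuousOn (K := ⟨K, hK0.le⟩) ?_ |>.restrict
      apply LipschitzOnWith.of_dist_le_mul
      intro p hp q hq
      exact (by simpa [dist_eq_norm] using hlip p hp q hq : dist (φ p) (φ q) ≤ K * dist p q)
    have hg : Measurable (fun ω => (⟨x t ω, hxX t ω⟩ : X)) :=
      (hxmeas t).subtype_mk
    exact hcont.measurable.comp hg
  have hemeas : ∀ t, Measurable (e t) := by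
    intro t
    have : e t = fun ω => x (t + 1) ω - φ (x t ω) := by
      funext ω; rw [hrec t ω]; abel
    rw [this]
    exact (hxmeas (t + 1)).sub (hφx t)
  set A : ℕ → Set Ω := fun t => {ω' | η t < ‖e t ω'‖} with hA
  have hAmeas : ∀ t, MeasurableSet (A t) :=
    fun t => measurableSet_lt measurable_const (hemeas t).norm
  -- μ (A t) ≤ ofReal (δ t)
  have hmeasA : ∀ t, μ (A t) ≤ ENNReal.ofReal (δ t) := by
    intro t
    have hint : Integrable (Set.indicator (A t) (fun _ => (1 : ℝ))) μ :=
      (integrable_const (1 : ℝ)).indicator (hAmeas t)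
    have h1 : ∫ ω, (μ[Set.indicator (A t) (fun _ => (1 : ℝ)) | F t]) ω ∂μ
        = ∫ ω, Set.indicator (A t) (fun _ => (1 : ℝ)) ω ∂μ :=
      integral_condExp (F.le t)
    have h2 : ∫ ω, Set.indicator (A t) (fun _ => (1 : ℝ)) ω ∂μ
        = (μ (A t)).toReal := by
      rw [integral_indicator_const _ (hAmeas t)]; simp [measureReal_def]
    have h3 : ∫ ω, (μ[Set.indicator (A t) (fun _ => (1 : ℝ)) | F t]) ω ∂μ ≤ δ t := by
      calc ∫ ω, (μ[Set.indicator (A t) (fun _ => (1 : ℝ)) | F t]) ω ∂μ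
          ≤ ∫ _, δ t ∂μ := integral_mono_ae integrable_condExp (integrable_const _) (hcond t)
        _ = δ t := by simp
    have h4 : (μ (A t)).toReal ≤ δ t := by rw [← h2, ← h1]; exact h3
    rw [← ENNReal.ofReal_toReal (measure_ne_top μ (A t))]
    exact ENNReal.ofReal_le_ofReal h4
  -- Borel–Cantelli
  have hsum : (∑' t, μ (A t)) ≠ ∞ := by
    refine ne_top_of_le_ne_top ?_ (ENNReal.tsum_le_tsum hmeasA)
    rw [← ENNReal.ofReal_tsum_of_nonneg hδ hδsum]
    exact ENNReal.ofReal_ne_top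
  have hBC : ∀ᵐ ω ∂μ, ∀ᶠ t in atTop, ω ∉ A t := ae_eventually_notMem hsum
  filter_upwards [hBC] with ω hω
  -- deterministic part
  have he0 : Tendsto (fun t => ‖e t ω‖) atTop (nhds 0) := by
    refine squeeze_zero' ?_ ?_ hη0
    · exact Eventually.of_forall fun t => norm_nonneg _
    · filter_upwards [hω] with t ht
      simpa [hA, not_lt] using ht
  have hrec' : ∀ t, ‖x (t + 1) ω - xstar‖ ≤ K * ‖x t ω - xstar‖ + ‖e t ω‖ := by
    intro t
    have : x (t + 1) ω - xstar = (φ (x t ω) - φ xstar) + e t ω := by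
      rw [hrec t ω, hfix]; abel
    rw [this]
    calc ‖(φ (x t ω) - φ xstar) + e t ω‖ ≤ ‖φ (x t ω) - φ xstar‖ + ‖e t ω‖ :=
          norm_add_le _ _
      _ ≤ K * ‖x t ω - xstar‖ + ‖e t ω‖ := by
          have := hlip (x t ω) (hxX t ω) xstar hxstarX; linarith
  have hconv : Tendsto (fun t => ‖x t ω - xstar‖) atTop (nhds 0) :=
    det_contraction_aux hK0 hK1 _ _ (fun t => norm_nonneg _) (fun t => norm_nonneg _)
      hrec' he0
  exact tendsto_iff_norm_sub_tendsto_zero.mpr hconv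
end
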